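/- arXiv:1901.03658 — 4 statements merged into one kernel-verified Lean document; each statement's English description precedes it below -/
import Mathlib

section
/- For f ∈ L¹(ℝⁿ) and g ∈ L^p_{uloc}(ℝⁿ) with 1 ≤ p < ∞, the convolution f * g satisfies ‖f * g‖_{L^p_{uloc}(ℝⁿ)} ≤ ‖f‖_{L¹(ℝⁿ)} ‖g‖_{L^p_{uloc}(ℝⁿ)}. -/
/-! Pointwise `|f * g|(x) ≤ ∫ |f y| |g (x - y)| dy`. Hölder's inequality for the measure
`|f y| dy` gives `(∫ |f y| |g (x - y)| dy) ^ p ≤ ‖f‖₁ ^ (p - 1) ∫ |f y| |g (x - y)| ^ p dy`.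
Integrating over a unit ball `B₁(x₀)` and exchanging the integrals (Tonelli), the inner integral
is `‖g‖_{L^p(B₁(x₀ - y))} ^ p ≤ ‖g‖_{L^p_uloc} ^ p` by translation invariance, and what is left
is `‖f‖₁ ^ p ‖g‖_{L^p_uloc} ^ p`. -/

open MeasureTheory Metric Function
open scoped ENNReal

section WeightedHolder

variable {α β : Type*} [MeasurableSpace α] [MeasurableSpace β]

theorem ENNReal.rpow_lintegral_mul_le {μ : Measure α} {r : ℝ} (hr : 1 ≤ r) {F G : α → ℝ≥0∞}
    (hF : AEMeasurable F μ) (hG : AEMeasurable G μ) :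
    (∫⁻ y, F y * G y ∂μ) ^ r ≤ (∫⁻ y, F y ∂μ) ^ (r - 1) * ∫⁻ y, F y * G y ^ r ∂μ := by
  have hr₀ : 0 < r := one_pos.trans_le hr
  have hinv : r⁻¹ ≤ 1 := inv_le_one_of_one_le₀ hr
  -- Hölder with exponents `1 - 1/r` and `1/r` for `F G = F ^ (1 - 1/r) * (F G ^ r) ^ (1/r)`.
  have hsplit : ∀ y, F y ^ (1 - r⁻¹) * (F y * G y ^ r) ^ r⁻¹ = F y * G y := fun y => by
    rw [ENNReal.mul_rpow_of_nonneg _ _ (by positivity), ← ENNReal.rpow_mul,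
      mul_inv_cancel₀ hr₀.ne', ENNReal.rpow_one, ← mul_assoc,
      ← ENNReal.rpow_add_of_nonneg _ _ (by linarith) (by positivity), sub_add_cancel,
      ENNReal.rpow_one]
  have holder := lintegral_mul_norm_pow_le (g := fun y => F y * G y ^ r) hF
    (hF.mul (hG.pow_const r)) (sub_nonneg.2 hinv) (inv_nonneg.2 hr₀.le) (sub_add_cancel 1 r⁻¹)
  simp only [hsplit] at holder
  calc (∫⁻ y, F y * G y ∂μ) ^ r
      ≤ ((∫⁻ y, F y ∂μ) ^ (1 - r⁻¹) * (∫⁻ y, F y * G y ^ r ∂μ) ^ r⁻¹) ^ r :=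
        ENNReal.rpow_le_rpow holder hr₀.le
    _ = (∫⁻ y, F y ∂μ) ^ (r - 1) * ∫⁻ y, F y * G y ^ r ∂μ := by
        rw [ENNReal.mul_rpow_of_nonneg _ _ hr₀.le, ← ENNReal.rpow_mul, ← ENNReal.rpow_mul,
          inv_mul_cancel₀ hr₀.ne', ENNReal.rpow_one, sub_mul, one_mul, inv_mul_cancel₀ hr₀.ne']

variable {μ : Measure α} {ν : Measure β} [SFinite μ] [SFinite ν]

theorem lintegral_rpow_lintegral_mul_le {r : ℝ} (hr : 1 ≤ r) {F : β → ℝ≥0∞}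
    {K : α → β → ℝ≥0∞} {C : ℝ≥0∞} (hF : AEMeasurable F ν)
    (hK : AEMeasurable (uncurry K) (μ.prod ν))
    (hC : ∀ y, ∫⁻ x, K x y ^ r ∂μ ≤ C) :
    ∫⁻ x, (∫⁻ y, F y * K x y ∂ν) ^ r ∂μ ≤ (∫⁻ y, F y ∂ν) ^ r * C := by
  set A := ∫⁻ y, F y ∂ν
  have hKr : AEMeasurable (uncurry fun x y => F y * K x y ^ r) (μ.prod ν) :=
    hF.comp_snd.mul (hK.pow_const r)
  calc ∫⁻ x, (∫⁻ y, F y * K x y ∂ν) ^ r ∂μ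
      ≤ ∫⁻ x, A ^ (r - 1) * ∫⁻ y, F y * K x y ^ r ∂ν ∂μ := by
        refine lintegral_mono_ae ?_
        filter_upwards [hK.aestronglyMeasurable.prodMk_left] with x hx
        exact ENNReal.rpow_lintegral_mul_le hr hF hx.aemeasurable
    _ = A ^ (r - 1) * ∫⁻ y, ∫⁻ x, F y * K x y ^ r ∂μ ∂ν := by
        rw [lintegral_const_mul'' _ hKr.lintegral_prod_right, lintegral_lintegral_swap hKr]
    _ = A ^ (r - 1) * ∫⁻ y, F y * ∫⁻ x, K x y ^ r ∂μ ∂ν := by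
        congr 1
        refine lintegral_congr_ae ?_
        filter_upwards [hK.aestronglyMeasurable.prodMk_right] with y hy
        exact lintegral_const_mul'' _ (hy.aemeasurable.pow_const r)
    _ ≤ A ^ (r - 1) * (A * C) := by
        gcongr
        calc ∫⁻ y, F y * ∫⁻ x, K x y ^ r ∂μ ∂ν ≤ ∫⁻ y, F y * C ∂ν := by gcongr; exact hC _
          _ = A * C := lintegral_mul_const'' _ hF
    _ = A ^ r * C := by
        rw [← mul_assoc]
        nth_rewrite 2 [← ENNReal.rpow_one A]
        rw [← ENNReal.rpow_add_of_nonneg _ _ (by linarith) zero_le_one, sub_add_cancel]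

theorem eLpNorm_lintegral_mul_le {p : ℝ≥0∞} (hp : 1 ≤ p) (hp' : p ≠ ∞) {F : β → ℝ≥0∞}
    {K : α → β → ℝ≥0∞} {C : ℝ≥0∞} (hF : AEMeasurable F ν)
    (hK : AEMeasurable (uncurry K) (μ.prod ν))
    (hC : ∀ y, eLpNorm (fun x => K x y) p μ ≤ C) :
    eLpNorm (fun x => ∫⁻ y, F y * K x y ∂ν) p μ ≤ (∫⁻ y, F y ∂ν) * C := by
  have hp₀ : p ≠ 0 := (one_pos.trans_le hp).ne'
  have hr : 1 ≤ p.toReal := ENNReal.toReal_one ▸ ENNReal.toReal_mono hp' hp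
  have hr₀ : 0 < p.toReal := one_pos.trans_le hr
  have hCr : ∀ y, ∫⁻ x, K x y ^ p.toReal ∂μ ≤ C ^ p.toReal := fun y => by
    have := ENNReal.rpow_le_rpow (hC y) hr₀.le
    rwa [eLpNorm_eq_lintegral_rpow_enorm_toReal hp₀ hp', ← ENNReal.rpow_mul, one_div,
      inv_mul_cancel₀ hr₀.ne', ENNReal.rpow_one] at this
  rw [eLpNorm_eq_lintegral_rpow_enorm_toReal hp₀ hp']
  calc (∫⁻ x, ‖∫⁻ y, F y * K x y ∂ν‖ₑ ^ p.toReal ∂μ) ^ (1 / p.toReal)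
      ≤ ((∫⁻ y, F y ∂ν) ^ p.toReal * C ^ p.toReal) ^ (1 / p.toReal) :=
        ENNReal.rpow_le_rpow (lintegral_rpow_lintegral_mul_le hr hF hK hCr) (by positivity)
    _ = (∫⁻ y, F y ∂ν) * C := by
        rw [← ENNReal.mul_rpow_of_nonneg _ _ hr₀.le, ← ENNReal.rpow_mul,
          mul_one_div_cancel hr₀.ne', ENNReal.rpow_one]

end WeightedHolder

theorem eLpNorm_comp_sub_right_restrict_ball {G ε : Type*} [NormedAddCommGroup G]
    [MeasurableSpace G] [BorelSpace G] [TopologicalSpace ε] [ContinuousENorm ε]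
    (μ : Measure G) [μ.IsAddRightInvariant]
    (g : G → ε) (p : ℝ≥0∞) (x₀ y : G) (ρ : ℝ) :
    eLpNorm (fun x => g (x - y)) p (μ.restrict (ball x₀ ρ)) =
      eLpNorm g p (μ.restrict (ball (x₀ - y) ρ)) := by
  have hpre : (· - y) ⁻¹' ball (x₀ - y) ρ = ball x₀ ρ := by
    ext x
    simp
  have hmp := (measurePreserving_sub_right μ y).restrict_preimage_emb
    (MeasurableEquiv.subRight y).measurableEmbedding (ball (x₀ - y) ρ)
  rw [hpre] at hmp
  rw [← hmp.map_eq]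
  exact ((MeasurableEquiv.subRight y).measurableEmbedding.eLpNorm_map_measure (g := g)).symm

theorem young_uloc_general (n : ℕ) (p : ℝ≥0∞) (hp : 1 ≤ p) (hp' : p ≠ ∞)
    (f g : EuclideanSpace ℝ (Fin n) → ℝ)
    (hf : Integrable f) (hg : AEStronglyMeasurable g volume) :
    (⨆ x₀ : EuclideanSpace ℝ (Fin n),
        eLpNorm (fun x => ∫ y, f y * g (x - y)) p (volume.restrict (ball x₀ 1))) ≤
      eLpNorm f 1 volume *
        ⨆ x₀ : EuclideanSpace ℝ (Fin n), eLpNorm g p (volume.restrict (ball x₀ 1)) := by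
  rw [eLpNorm_one_eq_lintegral_enorm]
  refine iSup_le fun x₀ => ?_
  have hK : AEMeasurable (uncurry fun x y => ‖g (x - y)‖ₑ)
      ((volume.restrict (ball x₀ 1)).prod volume) :=
    (hg.enorm.comp_quasiMeasurePreserving
      (quasiMeasurePreserving_sub_of_right_invariant volume volume)).mono_ac
      (Measure.restrict_le_self.absolutelyContinuous.prod .rfl)
  calc eLpNorm (fun x => ∫ y, f y * g (x - y)) p (volume.restrict (ball x₀ 1))
      ≤ eLpNorm (fun x => ∫⁻ y, ‖f y‖ₑ * ‖g (x - y)‖ₑ) p (volume.restrict (ball x₀ 1)) :=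
        eLpNorm_mono_enorm fun x => by
          simpa only [enorm_mul, enorm_eq_self] using
            enorm_integral_le_lintegral_enorm fun y => f y * g (x - y)
    _ ≤ _ := eLpNorm_lintegral_mul_le hp hp' hf.1.enorm hK fun y => by
        rw [eLpNorm_enorm, eLpNorm_comp_sub_right_restrict_ball]
        exact le_iSup (fun z => eLpNorm g p (volume.restrict (ball z 1))) (x₀ - y)

/-- Young's inequality in uniformly local spaces:
`‖f * g‖_{L^p_uloc} ≤ ‖f‖_{L¹} ‖g‖_{L^p_uloc}` for `1 ≤ p < ∞`. -/
theorem young_uloc (n : ℕ) (hn : 0 < n) (p : ℝ≥0∞) (hp : 1 ≤ p) (hp' : p ≠ ∞)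
    (f g : EuclideanSpace ℝ (Fin n) → ℝ)
    (hf : Integrable f) (hg : AEStronglyMeasurable g volume) :
    (⨆ x₀ : EuclideanSpace ℝ (Fin n),
        eLpNorm (fun x => ∫ y, f y * g (x - y)) p (volume.restrict (ball x₀ 1))) ≤
      eLpNorm f 1 volume *
        ⨆ x₀ : EuclideanSpace ℝ (Fin n), eLpNorm g p (volume.restrict (ball x₀ 1)) :=
  young_uloc_general n p hp hp' f g hf hg
end

section
/- For α > 0, f measurable with (1+|x|)^{(n+α)/2} f ∈ L²(ℝⁿ), and g ∈ L²_{uloc}(ℝⁿ), the convolution f * g satisfies ‖f * g‖_{L^∞(ℝⁿ)} ≤ C_α ‖(1+|x|)^{(n+α)/2} f‖_{L²(ℝⁿ)} ‖g‖_{L²_{uloc}(ℝⁿ)}. -/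
/-!
Write `f y * g (x - y) = (w f)(y) · (w⁻¹ g(x - ·))(y)` with `w y = (1 + |y|)^{(n+α)/2}` and apply
Cauchy–Schwarz. The square of the second factor is `∫ V(y) |g(x - y)|² dy` with
`V y = (1 + |y|)^{-(n+α)}`, which is integrable because `n + α > n`, and is comparable to its own
averages over unit balls: `|B₁| V(y) ≤ 2^{n+α} ∫_{B₁(y)} V`. Inserting this and exchanging the order
of integration bounds the integral by `2^{n+α} |B₁|⁻¹ ‖V‖₁ sup_z ∫_{B₁(z)} |g(x - ·)|²`, and the
supremum is `‖g‖²_{L²_uloc}` by translation invariance.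
-/

open MeasureTheory Metric
open scoped ENNReal NNReal

section BallAveraging

variable {X : Type*} [PseudoMetricSpace X] [MeasurableSpace X] [BorelSpace X]
  [SecondCountableTopology X] {μ : Measure X} [SFinite μ]

theorem lintegral_setLIntegral_ball_mul_comm {F G : X → ℝ≥0∞} (hF : AEMeasurable F μ)
    (hG : AEMeasurable G μ) (ρ : ℝ) :
    ∫⁻ y, (∫⁻ z in ball y ρ, F z ∂μ) * G y ∂μ = ∫⁻ z, F z * ∫⁻ y in ball z ρ, G y ∂μ ∂μ := by
  set P : X → X → ℝ≥0∞ := fun y z => {p : X × X | dist p.2 p.1 < ρ}.indicator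
    (fun p => F p.2 * G p.1) (y, z)
  have hP : AEMeasurable (Function.uncurry P) (μ.prod μ) :=
    ((hF.comp_quasiMeasurePreserving Measure.quasiMeasurePreserving_snd).mul
      (hG.comp_quasiMeasurePreserving Measure.quasiMeasurePreserving_fst)).indicator
      (measurableSet_lt (by fun_prop) measurable_const)
  have hP_left : ∀ y, ∫⁻ z, P y z ∂μ = (∫⁻ z in ball y ρ, F z ∂μ) * G y := fun y => by
    rw [← lintegral_mul_const'' _ hF.restrict, ← lintegral_indicator measurableSet_ball]
    rfl
  have hP_right : ∀ z, ∫⁻ y, P y z ∂μ = F z * ∫⁻ y in ball z ρ, G y ∂μ := fun z => by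
    classical
    rw [← lintegral_const_mul'' _ hG.restrict, ← lintegral_indicator measurableSet_ball]
    simp only [P, Set.indicator_apply, Set.mem_ofPred_eq, mem_ball, dist_comm z]
  simp only [← hP_left, ← hP_right]
  exact lintegral_lintegral_swap hP

theorem lintegral_mul_le_of_le_setLIntegral_ball {V G : X → ℝ≥0∞} {b c : ℝ≥0∞} {ρ : ℝ}
    (hV : AEMeasurable V μ) (hG : AEMeasurable G μ)
    (hV_ball : ∀ y, b * V y ≤ c * ∫⁻ z in ball y ρ, V z ∂μ) :
    b * ∫⁻ y, V y * G y ∂μ ≤ c * (∫⁻ z, V z ∂μ) * ⨆ z, ∫⁻ y in ball z ρ, G y ∂μ := by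
  set S := ⨆ z, ∫⁻ y in ball z ρ, G y ∂μ
  calc b * ∫⁻ y, V y * G y ∂μ
      ≤ ∫⁻ y, b * V y * G y ∂μ := by
        simpa only [mul_assoc] using lintegral_const_mul_le b _
    _ ≤ ∫⁻ y, (∫⁻ z in ball y ρ, c * V z ∂μ) * G y ∂μ := by
        gcongr with y
        rw [lintegral_const_mul'' _ hV.restrict]
        exact hV_ball y
    _ = ∫⁻ z, c * V z * ∫⁻ y in ball z ρ, G y ∂μ ∂μ :=
        lintegral_setLIntegral_ball_mul_comm (hV.const_mul c) hG ρ
    _ ≤ ∫⁻ z, c * V z * S ∂μ := by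
        gcongr with z
        exact le_iSup (fun z => ∫⁻ y in ball z ρ, G y ∂μ) z
    _ = c * (∫⁻ z, V z ∂μ) * S := by
        rw [lintegral_mul_const'' _ (hV.const_mul c), lintegral_const_mul'' _ hV]

end BallAveraging

section JapaneseBracket

variable {E : Type*}

theorem one_add_norm_rpow_neg_le_of_dist_le [SeminormedAddCommGroup E] {r : ℝ} (hr : 0 ≤ r)
    {y z : E} (hyz : dist z y ≤ 1) : (1 + ‖y‖) ^ (-r) ≤ 2 ^ r * (1 + ‖z‖) ^ (-r) := by
  have hz : 1 + ‖z‖ ≤ 2 * (1 + ‖y‖) := by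
    have := norm_le_norm_add_norm_sub' z y
    rw [dist_eq_norm] at hyz
    linarith [norm_nonneg y]
  calc (1 + ‖y‖) ^ (-r) = 2 ^ r * (2 * (1 + ‖y‖)) ^ (-r) := by
        rw [Real.mul_rpow (by norm_num) (by positivity), ← mul_assoc,
          ← Real.rpow_add two_pos, add_neg_cancel, Real.rpow_zero, one_mul]
    _ ≤ 2 ^ r * (1 + ‖z‖) ^ (-r) := by
        gcongr 2 ^ r * ?_
        exact Real.rpow_le_rpow_of_nonpos (by positivity) hz (neg_nonpos.mpr hr)

theorem enorm_one_add_norm_rpow_inv_mul_sq [SeminormedAddCommGroup E] (r : ℝ) (y : E) (a : ℝ) :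
    ‖((1 + ‖y‖) ^ (r / 2))⁻¹ * a‖ₑ ^ 2 = ENNReal.ofReal ((1 + ‖y‖) ^ (-r)) * ‖a‖ₑ ^ 2 := by
  have hy : 0 < 1 + ‖y‖ := by positivity
  rw [enorm_mul, mul_pow, Real.enorm_eq_ofReal (by positivity),
    ← ENNReal.ofReal_pow (by positivity), inv_pow, ← Real.rpow_natCast, ← Real.rpow_mul hy.le,
    ← Real.rpow_neg hy.le]
  norm_num

theorem measure_ball_mul_le_setLIntegral_ball_one_add_norm_rpow_neg [SeminormedAddCommGroup E]
    [MeasurableSpace E] [OpensMeasurableSpace E] (μ : Measure E) {r : ℝ} (hr : 0 ≤ r) (y : E) :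
    μ (ball y 1) * ENNReal.ofReal ((1 + ‖y‖) ^ (-r)) ≤
      ENNReal.ofReal (2 ^ r) * ∫⁻ z in ball y 1, ENNReal.ofReal ((1 + ‖z‖) ^ (-r)) ∂μ := by
  rw [← lintegral_const_mul' _ _ ENNReal.ofReal_ne_top, mul_comm, ← setLIntegral_const]
  refine setLIntegral_mono' measurableSet_ball fun z hz => ?_
  rw [← ENNReal.ofReal_mul (by positivity)]
  exact ENNReal.ofReal_le_ofReal
    (one_add_norm_rpow_neg_le_of_dist_le hr (mem_ball.mp hz).le)

theorem exists_lintegral_one_add_norm_rpow_neg_mul_le [NormedAddCommGroup E] [NormedSpace ℝ E]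
    [FiniteDimensional ℝ E] [MeasurableSpace E] [BorelSpace E] (μ : Measure E)
    [μ.IsAddHaarMeasure] {r : ℝ} (hr : (Module.finrank ℝ E : ℝ) < r) :
    ∃ C : ℝ≥0, ∀ G : E → ℝ≥0∞, AEMeasurable G μ →
      ∫⁻ y, ENNReal.ofReal ((1 + ‖y‖) ^ (-r)) * G y ∂μ ≤ C * ⨆ z, ∫⁻ y in ball z 1, G y ∂μ := by
  have hr₀ : 0 ≤ r := (Nat.cast_nonneg _).trans hr.le
  set V : E → ℝ≥0∞ := fun y => ENNReal.ofReal ((1 + ‖y‖) ^ (-r))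
  have hV : Measurable V := by fun_prop
  set b := μ (ball 0 1)
  have hb₀ : b ≠ 0 := (measure_ball_pos μ 0 one_pos).ne'
  have hb : b ≠ ∞ := measure_ball_lt_top.ne
  have hC : b⁻¹ * ENNReal.ofReal (2 ^ r) * ∫⁻ z, V z ∂μ ≠ ∞ := by
    have := (finite_integral_one_add_norm (μ := μ) hr).ne
    finiteness
  refine ⟨(b⁻¹ * ENNReal.ofReal (2 ^ r) * ∫⁻ z, V z ∂μ).toNNReal, fun G hG => ?_⟩
  rw [ENNReal.coe_toNNReal hC, mul_assoc b⁻¹, mul_assoc b⁻¹, ← ENNReal.mul_le_iff_le_inv hb₀ hb]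
  refine lintegral_mul_le_of_le_setLIntegral_ball hV.aemeasurable hG fun y => ?_
  simpa only [Measure.addHaar_ball_center] using
    measure_ball_mul_le_setLIntegral_ball_one_add_norm_rpow_neg μ hr₀ y

end JapaneseBracket

theorem eLpNorm_two_sq_eq_lintegral {α ε : Type*} [MeasurableSpace α] [ENorm ε]
    (μ : Measure α) (f : α → ε) : eLpNorm f 2 μ ^ 2 = ∫⁻ y, ‖f y‖ₑ ^ 2 ∂μ := by
  simpa using eLpNorm_nnreal_pow_eq_lintegral (f := f) (μ := μ) (p := 2) two_ne_zero

theorem enorm_integral_mul_le_eLpNorm_weighted {α : Type*} [MeasurableSpace α] {μ : Measure α}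
    {w f h : α → ℝ} (hw : ∀ y, w y ≠ 0) (hwf : AEStronglyMeasurable (fun y => w y * f y) μ)
    (hwh : AEStronglyMeasurable (fun y => (w y)⁻¹ * h y) μ) :
    ‖∫ y, f y * h y ∂μ‖ₑ ≤
      eLpNorm (fun y => w y * f y) 2 μ * eLpNorm (fun y => (w y)⁻¹ * h y) 2 μ := by
  have hsplit : (fun y => f y * h y) = fun y => (w y * f y) * ((w y)⁻¹ * h y) := by
    ext y
    rw [mul_mul_mul_comm, mul_inv_cancel₀ (hw y), one_mul]
  calc ‖∫ y, f y * h y ∂μ‖ₑ ≤ eLpNorm (fun y => f y * h y) 1 μ := by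
        rw [eLpNorm_one_eq_lintegral_enorm]
        exact enorm_integral_le_lintegral_enorm _
    _ ≤ eLpNorm (fun y => w y * f y) 2 μ * eLpNorm (fun y => (w y)⁻¹ * h y) 2 μ := by
        rw [hsplit]
        simpa using eLpNorm_le_eLpNorm_mul_eLpNorm'_of_norm hwf hwh (· * ·) 1
          (.of_forall fun y => by simp)

section Translation

variable {E : Type*} [NormedAddCommGroup E] [MeasurableSpace E] [BorelSpace E] (μ : Measure E)
  [μ.IsAddLeftInvariant] [μ.IsNegInvariant]

theorem setLIntegral_ball_comp_sub_left (φ : E → ℝ≥0∞) (x z : E) (ρ : ℝ) :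
    ∫⁻ y in ball z ρ, φ (x - y) ∂μ = ∫⁻ u in ball (x - z) ρ, φ u ∂μ := by
  have hpre : (fun y => x - y) ⁻¹' ball (x - z) ρ = ball z ρ := by
    ext y
    simp only [Set.mem_preimage, mem_ball, dist_sub_left]
  rw [← hpre]
  exact (Measure.measurePreserving_sub_left μ x).setLIntegral_comp_preimage_emb
    (MeasurableEquiv.subLeft x).measurableEmbedding φ _

theorem iSup_setLIntegral_ball_enorm_comp_sub_sq_le {F : Type*} [ENorm F]
    (g : E → F) (x : E) (ρ : ℝ) :
    ⨆ z, ∫⁻ y in ball z ρ, ‖g (x - y)‖ₑ ^ 2 ∂μ ≤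
      (⨆ x₀, eLpNorm g 2 (μ.restrict (ball x₀ ρ))) ^ 2 := by
  refine iSup_le fun z => ?_
  rw [setLIntegral_ball_comp_sub_left μ (fun u => ‖g u‖ₑ ^ 2),
    ← eLpNorm_two_sq_eq_lintegral]
  gcongr
  exact le_iSup (fun x₀ => eLpNorm g 2 (μ.restrict (ball x₀ ρ))) (x - z)

end Translation

theorem conv_Linfty_weighted_general (n : ℕ) (α : ℝ) (hα : 0 < α) :
    ∃ C > 0, ∀ f g : EuclideanSpace ℝ (Fin n) → ℝ,
      MemLp (fun x => (1 + ‖x‖) ^ (((n : ℝ) + α) / 2) * f x) 2 volume →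
      AEStronglyMeasurable g volume →
      ∀ x, ENNReal.ofReal |∫ y, f y * g (x - y)| ≤
        ENNReal.ofReal C *
          eLpNorm (fun z => (1 + ‖z‖) ^ (((n : ℝ) + α) / 2) * f z) 2 volume *
          ⨆ x₀ : EuclideanSpace ℝ (Fin n), eLpNorm g 2 (volume.restrict (ball x₀ 1)) := by
  obtain ⟨C, hC⟩ := exists_lintegral_one_add_norm_rpow_neg_mul_le
    (volume : Measure (EuclideanSpace ℝ (Fin n))) (r := n + α) (by simpa using hα)
  refine ⟨NNReal.sqrt C + 1, by positivity, fun f g hf hg x => ?_⟩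
  set M := ⨆ x₀ : EuclideanSpace ℝ (Fin n), eLpNorm g 2 (volume.restrict (ball x₀ 1))
  set w : EuclideanSpace ℝ (Fin n) → ℝ := fun y => (1 + ‖y‖) ^ (((n : ℝ) + α) / 2)
  have hbase : ∀ y : EuclideanSpace ℝ (Fin n), 0 < 1 + ‖y‖ := fun y => by positivity
  have hw_pos : ∀ y, 0 < w y := fun y => Real.rpow_pos_of_pos (hbase y) _
  have hw_cont : Continuous w :=
    (continuous_const.add continuous_norm).rpow_const fun y => Or.inl (hbase y).ne'
  have hg_x : AEStronglyMeasurable (fun y => g (x - y)) volume :=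
    hg.comp_measurePreserving (Measure.measurePreserving_sub_left volume x)
  have hwg : eLpNorm (fun y => (w y)⁻¹ * g (x - y)) 2 volume ≤ NNReal.sqrt C * M := by
    rw [← ENNReal.pow_le_pow_left_iff two_ne_zero, eLpNorm_two_sq_eq_lintegral, mul_pow,
      ← ENNReal.coe_pow, NNReal.sq_sqrt]
    simp only [w, enorm_one_add_norm_rpow_inv_mul_sq]
    exact (hC _ (hg_x.enorm.pow_const 2)).trans
      (by gcongr; exact iSup_setLIntegral_ball_enorm_comp_sub_sq_le volume g x 1)
  have hsqrtC : (NNReal.sqrt C : ℝ≥0∞) ≤ ENNReal.ofReal (NNReal.sqrt C + 1) := by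
    rw [← ENNReal.ofReal_coe_nnreal]
    exact ENNReal.ofReal_le_ofReal (by linarith)
  calc ENNReal.ofReal |∫ y, f y * g (x - y)| = ‖∫ y, f y * g (x - y)‖ₑ :=
        (Real.enorm_eq_ofReal_abs _).symm
    _ ≤ eLpNorm (fun y => w y * f y) 2 volume *
          eLpNorm (fun y => (w y)⁻¹ * g (x - y)) 2 volume :=
        enorm_integral_mul_le_eLpNorm_weighted (fun y => (hw_pos y).ne') hf.1
          ((hw_cont.inv₀ fun y => (hw_pos y).ne').aestronglyMeasurable.mul hg_x)
    _ ≤ eLpNorm (fun y => w y * f y) 2 volume * (NNReal.sqrt C * M) := by gcongr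
    _ ≤ ENNReal.ofReal (NNReal.sqrt C + 1) * eLpNorm (fun y => w y * f y) 2 volume * M := by
        rw [mul_left_comm, ← mul_assoc]
        gcongr

/-- `‖f * g‖_{L^∞} ≤ C_α ‖(1+|x|)^{(n+α)/2} f‖_{L²} ‖g‖_{L²_uloc}`. -/
theorem conv_Linfty_weighted (n : ℕ) (hn : 0 < n) (α : ℝ) (hα : 0 < α) :
    ∃ C > 0, ∀ f g : EuclideanSpace ℝ (Fin n) → ℝ,
      MemLp (fun x => (1 + ‖x‖) ^ (((n : ℝ) + α) / 2) * f x) 2 volume →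
      AEStronglyMeasurable g volume →
      ∀ x, ENNReal.ofReal |∫ y, f y * g (x - y)| ≤
        ENNReal.ofReal C *
          eLpNorm (fun z => (1 + ‖z‖) ^ (((n : ℝ) + α) / 2) * f z) 2 volume *
          ⨆ x₀ : EuclideanSpace ℝ (Fin n), eLpNorm g 2 (volume.restrict (ball x₀ 1)) :=
  conv_Linfty_weighted_general n α hα
end

section
/- Let G₁ be a function on ℝⁿ satisfying the pointwise decay |G₁(x)| ≤ C(1+|x|)^{-n-α} for some α > 0, and for t > 0 set G_t(x) = t^{-n/(2s)} G₁(x / t^{1/(2s)}). Then for all 1 ≤ r < ∞, t > 0, and f ∈ L^r_{uloc}(ℝⁿ), the convolution satisfies ‖G_t * f‖_{L^∞(ℝⁿ)} ≤ C' max{1, t^{-n/(2sr)}} ‖f‖_{L^r_{uloc}(ℝⁿ)} for a constant C' depending only on n, s, α, C. -/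
/-!
Put `δ = t^{1/(2s)}`, so that `G_t(v) = δ^{-n} G₁(v/δ)`, and `ρ = min δ 1`. For `y ∈ B(w, ρ)` the
point `(x - y)/δ` lies within distance one of `(x - w)/δ`, hence
`|G_t(x - y)| ≤ B(w) := 2^{n+α} C δ^{-n} (1 + |x - w|/δ)^{-n-α}`, and `∫ B` does not depend on `δ`.
Averaging over centres (Tonelli) gives `|B(0,ρ)| ∫ |G_t(x - ·) f| = ∫_w ∫_{B(w,ρ)} |G_t(x - ·) f|`;
Hölder on each ball, together with `ρ ≤ 1`, bounds the inner integral by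
`B(w) |B(0,ρ)|^{1-1/r} ‖f‖_{L^r_uloc}`. What is left is `|B(0,ρ)|^{-1/r} ≲ max 1 (t^{-n/(2sr)})`.
-/

open MeasureTheory Metric Module
open scoped ENNReal

noncomputable def eLpNormUloc {X F : Type*} [PseudoMetricSpace X] [MeasurableSpace X]
    [NormedAddCommGroup F] (f : X → F) (p : ℝ≥0∞) (μ : Measure X) : ℝ≥0∞ :=
  ⨆ x₀, eLpNorm f p (μ.restrict (ball x₀ 1))

theorem eLpNorm_restrict_ball_le_eLpNormUloc {X F : Type*} [PseudoMetricSpace X]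
    [MeasurableSpace X] [NormedAddCommGroup F] (f : X → F) (p : ℝ≥0∞) (μ : Measure X)
    (x₀ : X) {ρ : ℝ} (hρ : ρ ≤ 1) :
    eLpNorm f p (μ.restrict (ball x₀ ρ)) ≤ eLpNormUloc f p μ :=
  (eLpNorm_mono_measure f (Measure.restrict_mono (ball_subset_ball hρ) le_rfl)).trans
    (le_iSup (fun x₀ ↦ eLpNorm f p (μ.restrict (ball x₀ 1))) x₀)

theorem setLIntegral_enorm_le_eLpNorm_mul_rpow {α F : Type*} [MeasurableSpace α]
    [NormedAddCommGroup F] {μ : Measure α} {s : Set α} {f : α → F} {p : ℝ≥0∞} (hp : 1 ≤ p)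
    (hf : AEStronglyMeasurable f (μ.restrict s)) :
    ∫⁻ y in s, ‖f y‖ₑ ∂μ ≤ eLpNorm f p (μ.restrict s) * μ s ^ (1 - 1 / p.toReal) := by
  simpa [eLpNorm_one_eq_lintegral_enorm] using eLpNorm_le_eLpNorm_mul_rpow_measure_univ hp hf

theorem lintegral_setLIntegral_ball {E : Type*} [NormedAddCommGroup E] [MeasurableSpace E]
    [BorelSpace E] [SecondCountableTopology E] (μ : Measure E) [SFinite μ] [μ.IsAddHaarMeasure]
    {g : E → ℝ≥0∞} (hg : AEMeasurable g μ) (ρ : ℝ) :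
    ∫⁻ w, ∫⁻ y in ball w ρ, g y ∂μ ∂μ = μ (ball 0 ρ) * ∫⁻ y, g y ∂μ := by
  have hS : MeasurableSet {q : E × E | dist q.2 q.1 < ρ} :=
    (isOpen_lt (by fun_prop) continuous_const).measurableSet
  calc ∫⁻ w, ∫⁻ y in ball w ρ, g y ∂μ ∂μ
      = ∫⁻ w, ∫⁻ y, {q : E × E | dist q.2 q.1 < ρ}.indicator (fun q ↦ g q.2) (w, y) ∂μ ∂μ := by
        simp_rw [← lintegral_indicator measurableSet_ball]
        rfl
    _ = ∫⁻ y, ∫⁻ w, (ball y ρ).indicator (fun _ ↦ g y) w ∂μ ∂μ := by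
        rw [lintegral_lintegral_swap (by exact hg.comp_snd.indicator hS)]
        refine lintegral_congr fun y ↦ lintegral_congr fun w ↦ ?_
        simp only [Set.indicator, Set.mem_ofPred_eq, mem_ball, dist_comm]
    _ = μ (ball 0 ρ) * ∫⁻ y, g y ∂μ := by
        simp_rw [lintegral_indicator_const measurableSet_ball, Measure.addHaar_ball_center μ _ ρ]
        rw [lintegral_mul_const'' _ hg, mul_comm]

theorem Real.rpow_neg_le_max_one_inv {x a : ℝ} (hx : 0 < x) (ha0 : 0 ≤ a) (ha1 : a ≤ 1) :
    x ^ (-a) ≤ max 1 x⁻¹ := by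
  rw [Real.rpow_neg hx.le, ← Real.inv_rpow hx.le]
  rcases le_total x⁻¹ 1 with hx1 | hx1
  · exact (Real.rpow_le_one (by positivity) hx1 ha0).trans (le_max_left _ _)
  · exact (Real.rpow_le_self_of_one_le hx1 ha1).trans (le_max_right _ _)

theorem Real.min_one_rpow_neg {δ a : ℝ} (hδ : 0 < δ) (ha : 0 ≤ a) :
    min δ 1 ^ (-a) = max 1 (δ ^ (-a)) := by
  rcases le_total δ 1 with h | h
  · rw [min_eq_left h,
      max_eq_right (Real.one_le_rpow_of_pos_of_le_one_of_nonpos hδ h (neg_nonpos.2 ha))]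
  · rw [min_eq_right h, Real.one_rpow,
      max_eq_left (Real.rpow_le_one_of_one_le_of_nonpos h (neg_nonpos.2 ha))]

theorem one_add_norm_rpow_neg_le {F : Type*} [SeminormedAddCommGroup F] {u v : F} {β : ℝ}
    (hβ : 0 ≤ β) (huv : ‖u - v‖ ≤ 1) :
    (1 + ‖u‖) ^ (-β) ≤ 2 ^ β * (1 + ‖v‖) ^ (-β) := by
  have hv : 1 + ‖v‖ ≤ 2 * (1 + ‖u‖) := by
    linarith [norm_le_norm_add_norm_sub' v u, norm_sub_rev u v, norm_nonneg u]
  calc (1 + ‖u‖) ^ (-β) = 2 ^ β * (2 * (1 + ‖u‖)) ^ (-β) := by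
        rw [Real.mul_rpow (by norm_num) (by positivity), ← mul_assoc,
          ← Real.rpow_add two_pos, add_neg_cancel, Real.rpow_zero, one_mul]
    _ ≤ 2 ^ β * (1 + ‖v‖) ^ (-β) :=
        mul_le_mul_of_nonneg_left
          (Real.rpow_le_rpow_of_nonpos (by positivity) hv (neg_nonpos.2 hβ)) (by positivity)

theorem abs_comp_inv_smul_sub_le {E : Type*} [SeminormedAddCommGroup E] [NormedSpace ℝ E]
    {G₁ : E → ℝ} {C β δ ρ : ℝ} (hG : ∀ v, |G₁ v| ≤ C * (1 + ‖v‖) ^ (-β)) (hC : 0 ≤ C)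
    (hβ : 0 ≤ β) (hδ : 0 < δ) (hρδ : ρ ≤ δ) {x w y : E} (hy : y ∈ ball w ρ) :
    |G₁ (δ⁻¹ • (x - y))| ≤ 2 ^ β * C * (1 + ‖δ⁻¹ • (x - w)‖) ^ (-β) := by
  have hclose : ‖δ⁻¹ • (x - y) - δ⁻¹ • (x - w)‖ ≤ 1 := by
    rw [← smul_sub, sub_sub_sub_cancel_left, norm_smul, norm_inv, Real.norm_eq_abs,
      abs_of_pos hδ, inv_mul_le_iff₀ hδ, mul_one, ← dist_eq_norm]
    exact (mem_ball'.1 hy).le.trans hρδ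
  calc |G₁ (δ⁻¹ • (x - y))| ≤ C * (1 + ‖δ⁻¹ • (x - y)‖) ^ (-β) := hG _
    _ ≤ C * (2 ^ β * (1 + ‖δ⁻¹ • (x - w)‖) ^ (-β)) := by
        gcongr; exact one_add_norm_rpow_neg_le hβ hclose
    _ = 2 ^ β * C * (1 + ‖δ⁻¹ • (x - w)‖) ^ (-β) := by ring

section HaarMeasure

variable {E : Type*} [NormedAddCommGroup E] [NormedSpace ℝ E] [FiniteDimensional ℝ E]
  [MeasurableSpace E] [BorelSpace E] (μ : Measure E) [μ.IsAddHaarMeasure]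

theorem lintegral_enorm_mul_le_eLpNormUloc {κ f B : E → ℝ} {ρ : ℝ} {p : ℝ≥0∞}
    (hρ : 0 < ρ) (hρ1 : ρ ≤ 1) (hp : 1 ≤ p)
    (hκf : AEStronglyMeasurable (fun y ↦ κ y * f y) μ) (hB : Integrable B μ)
    (hκB : ∀ w, ∀ y ∈ ball w ρ, |κ y| ≤ B w) :
    ∫⁻ y, ‖κ y * f y‖ₑ ∂μ ≤
      ENNReal.ofReal (∫ w, B w ∂μ) * μ (ball 0 ρ) ^ (-1 / p.toReal) * eLpNormUloc f p μ := by
  set V := μ (ball (0 : E) ρ)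
  set M := eLpNormUloc f p μ
  have hV0 : V ≠ 0 := (measure_ball_pos μ 0 hρ).ne'
  have hVtop : V ≠ ⊤ := measure_ball_lt_top.ne
  have hB0 : 0 ≤ B := fun w ↦ (abs_nonneg _).trans (hκB w w (mem_ball_self hρ))
  have hlocal : ∀ w, ∫⁻ y in ball w ρ, ‖κ y * f y‖ₑ ∂μ ≤
      ENNReal.ofReal (B w) * M * V ^ (1 - 1 / p.toReal) := by
    intro w
    have hdom : ∀ᵐ y ∂μ.restrict (ball w ρ), ‖κ y * f y‖ ≤ B w * ‖f y‖ :=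
      (ae_restrict_iff' measurableSet_ball).2 <| .of_forall fun y hy ↦ by
        rw [norm_mul, Real.norm_eq_abs]
        exact mul_le_mul_of_nonneg_right (hκB w y hy) (norm_nonneg _)
    calc ∫⁻ y in ball w ρ, ‖κ y * f y‖ₑ ∂μ
        ≤ eLpNorm (fun y ↦ κ y * f y) p (μ.restrict (ball w ρ)) * V ^ (1 - 1 / p.toReal) := by
          simpa only [Measure.addHaar_ball_center μ w ρ] using
            setLIntegral_enorm_le_eLpNorm_mul_rpow (s := ball w ρ) hp hκf.restrict
      _ ≤ ENNReal.ofReal (B w) * M * V ^ (1 - 1 / p.toReal) := by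
          gcongr
          exact (eLpNorm_le_mul_eLpNorm_of_ae_le_mul hdom p).trans
            (by gcongr; exact eLpNorm_restrict_ball_le_eLpNormUloc f p μ w hρ1)
  have hsplit : V ^ (1 - 1 / p.toReal) = V * V ^ (-1 / p.toReal) := by
    rw [sub_eq_add_neg, ← neg_div, ENNReal.rpow_add _ _ hV0 hVtop, ENNReal.rpow_one]
  refine (ENNReal.mul_le_mul_iff_right hV0 hVtop).1 ?_
  calc V * ∫⁻ y, ‖κ y * f y‖ₑ ∂μ
      = ∫⁻ w, ∫⁻ y in ball w ρ, ‖κ y * f y‖ₑ ∂μ ∂μ :=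
        (lintegral_setLIntegral_ball μ hκf.enorm ρ).symm
    _ ≤ ∫⁻ w, ENNReal.ofReal (B w) * (M * V ^ (1 - 1 / p.toReal)) ∂μ :=
        lintegral_mono fun w ↦ (hlocal w).trans_eq (mul_assoc _ _ _)
    _ = V * (ENNReal.ofReal (∫ w, B w ∂μ) * V ^ (-1 / p.toReal) * M) := by
        rw [lintegral_mul_const'' _ hB.aemeasurable.ennreal_ofReal,
          ← ofReal_integral_eq_lintegral_ofReal hB (.of_forall hB0), hsplit]
        ring

theorem integral_rpow_mul_comp_inv_smul_sub (φ : E → ℝ) {δ : ℝ} (hδ : 0 < δ) (x : E) :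
    ∫ w, δ ^ (-(finrank ℝ E : ℝ)) * φ (δ⁻¹ • (x - w)) ∂μ = ∫ v, φ v ∂μ := by
  rw [integral_const_mul, integral_sub_left_eq_self (fun v ↦ φ (δ⁻¹ • v)) μ x,
    Measure.integral_comp_inv_smul_of_nonneg μ φ hδ.le, smul_eq_mul, ← mul_assoc,
    Real.rpow_neg hδ.le, Real.rpow_natCast, inv_mul_cancel₀ (by positivity), one_mul]

theorem measure_ball_min_one_rpow_neg_le {δ a : ℝ} (hδ : 0 < δ) (ha0 : 0 ≤ a) (ha1 : a ≤ 1) :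
    μ (ball 0 (min δ 1)) ^ (-a) ≤
      ENNReal.ofReal (max 1 (μ.real (ball 0 1))⁻¹ * max 1 (δ ^ (-(finrank ℝ E * a)))) := by
  have hρ : 0 < min δ 1 := lt_min hδ one_pos
  have hv : 0 < μ.real (ball 0 1) :=
    ENNReal.toReal_pos (measure_ball_pos μ 0 one_pos).ne' measure_ball_lt_top.ne
  rw [Measure.addHaar_ball_of_pos μ 0 hρ, ← ofReal_measureReal measure_ball_lt_top.ne,
    ← ENNReal.ofReal_mul (by positivity), ENNReal.ofReal_rpow_of_pos (by positivity),
    Real.mul_rpow (by positivity) hv.le, ← Real.rpow_natCast, ← Real.rpow_mul hρ.le, mul_neg,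
    Real.min_one_rpow_neg hδ (by positivity), mul_comm]
  gcongr
  exact Real.rpow_neg_le_max_one_inv hv ha0 ha1

theorem lintegral_enorm_rescaled_kernel_mul_le {G₁ f : E → ℝ} {C β δ : ℝ} {p : ℝ≥0∞}
    (hG : ∀ v, |G₁ v| ≤ C * (1 + ‖v‖) ^ (-β)) (hC : 0 ≤ C) (hβ : (finrank ℝ E : ℝ) < β)
    (hδ : 0 < δ) (hp : 1 ≤ p) (x : E)
    (hm : AEStronglyMeasurable
      (fun y ↦ δ ^ (-(finrank ℝ E : ℝ)) * G₁ (δ⁻¹ • (x - y)) * f y) μ) :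
    ∫⁻ y, ‖δ ^ (-(finrank ℝ E : ℝ)) * G₁ (δ⁻¹ • (x - y)) * f y‖ₑ ∂μ ≤
      ENNReal.ofReal (2 ^ β * C * ∫ v, (1 + ‖v‖) ^ (-β) ∂μ) *
        μ (ball 0 (min δ 1)) ^ (-1 / p.toReal) * eLpNormUloc f p μ := by
  set φ : E → ℝ := fun v ↦ 2 ^ β * C * (1 + ‖v‖) ^ (-β)
  have hφ : Integrable φ μ := (integrable_one_add_norm hβ).const_mul _
  have hB : Integrable (fun w ↦ δ ^ (-(finrank ℝ E : ℝ)) * φ (δ⁻¹ • (x - w))) μ :=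
    ((hφ.comp_smul (inv_ne_zero hδ.ne')).comp_sub_left x).const_mul _
  refine (lintegral_enorm_mul_le_eLpNormUloc μ (lt_min hδ one_pos) (min_le_right _ _) hp hm hB
    fun w y hy ↦ ?_).trans_eq ?_
  · rw [abs_mul, abs_of_pos (by positivity)]
    exact mul_le_mul_of_nonneg_left (abs_comp_inv_smul_sub_le hG hC
      ((Nat.cast_nonneg _).trans hβ.le) hδ (min_le_left _ _) hy) (by positivity)
  · rw [integral_rpow_mul_comp_inv_smul_sub μ φ hδ x, integral_const_mul]

theorem lintegral_enorm_selfSimilar_kernel_mul_le {G₁ f : E → ℝ} {C β : ℝ} {p : ℝ≥0∞}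
    (hG : ∀ v, |G₁ v| ≤ C * (1 + ‖v‖) ^ (-β)) (hC : 0 ≤ C) (hβ : (finrank ℝ E : ℝ) < β)
    (hp : 1 ≤ p) (s : ℝ) {t : ℝ} (ht : 0 < t) (x : E)
    (hm : AEStronglyMeasurable (fun y ↦ t ^ (-(finrank ℝ E : ℝ) / (2 * s)) *
      G₁ (t ^ (-(1 : ℝ) / (2 * s)) • (x - y)) * f y) μ) :
    ∫⁻ y, ‖t ^ (-(finrank ℝ E : ℝ) / (2 * s)) * G₁ (t ^ (-(1 : ℝ) / (2 * s)) • (x - y)) * f y‖ₑ ∂μ ≤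
      ENNReal.ofReal (2 ^ β * C * (∫ v, (1 + ‖v‖) ^ (-β) ∂μ) * max 1 (μ.real (ball 0 1))⁻¹ *
        max 1 (t ^ (-(finrank ℝ E : ℝ) / (2 * s * p.toReal)))) * eLpNormUloc f p μ := by
  set δ := t ^ (1 / (2 * s))
  have hδ : 0 < δ := Real.rpow_pos_of_pos ht _
  have hkernel : ∀ y, t ^ (-(finrank ℝ E : ℝ) / (2 * s)) * G₁ (t ^ (-(1 : ℝ) / (2 * s)) • (x - y)) =
      δ ^ (-(finrank ℝ E : ℝ)) * G₁ (δ⁻¹ • (x - y)) := fun y ↦ by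
    rw [← Real.rpow_neg_one, ← Real.rpow_mul ht.le, ← Real.rpow_mul ht.le]
    ring_nf
  have hT : δ ^ (-(finrank ℝ E * (1 / p.toReal))) =
      t ^ (-(finrank ℝ E : ℝ) / (2 * s * p.toReal)) := by
    rw [← Real.rpow_mul ht.le]
    ring_nf
  have ha1 : 1 / p.toReal ≤ 1 := by
    rcases eq_or_ne p ⊤ with rfl | hp_top
    · simp
    · exact (div_le_one₀ (ENNReal.toReal_pos (one_pos.trans_le hp).ne' hp_top)).2
        (by simpa using ENNReal.toReal_mono hp_top hp)
  simp_rw [hkernel] at hm ⊢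
  refine (lintegral_enorm_rescaled_kernel_mul_le μ hG hC hβ hδ hp x hm).trans ?_
  have hvol := measure_ball_min_one_rpow_neg_le μ hδ (by positivity) ha1
  rw [hT, ← neg_div] at hvol
  calc _ ≤ ENNReal.ofReal (2 ^ β * C * ∫ v, (1 + ‖v‖) ^ (-β) ∂μ) * ENNReal.ofReal
          (max 1 (μ.real (ball 0 1))⁻¹ * max 1 (t ^ (-(finrank ℝ E : ℝ) / (2 * s * p.toReal)))) *
          eLpNormUloc f p μ := by gcongr
    _ = _ := by
        rw [← ENNReal.ofReal_mul (by positivity), mul_assoc (2 ^ β * C * _)]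

end HaarMeasure

theorem kernel_conv_Linfty_uloc_general (n : ℕ) (s α C : ℝ)
    (hα : 0 < α)
    (G₁ : EuclideanSpace ℝ (Fin n) → ℝ)
    (hG : ∀ x, |G₁ x| ≤ C * (1 + ‖x‖) ^ (-((n : ℝ) + α))) :
    ∃ C' > 0, ∀ r : ℝ, 1 ≤ r → ∀ t : ℝ, 0 < t →
      ∀ f : EuclideanSpace ℝ (Fin n) → ℝ, ∀ x,
        ENNReal.ofReal
            |∫ y, (t ^ (-(n : ℝ) / (2 * s)) * G₁ ((t ^ (-(1 : ℝ) / (2 * s))) • (x - y))) * f y| ≤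
          ENNReal.ofReal (C' * max 1 (t ^ (-(n : ℝ) / (2 * s * r)))) *
            ⨆ x₀ : EuclideanSpace ℝ (Fin n),
              eLpNorm f (ENNReal.ofReal r) (volume.restrict (ball x₀ 1)) := by
  have hd : finrank ℝ (EuclideanSpace ℝ (Fin n)) = n := finrank_euclideanSpace_fin
  have hC : 0 ≤ C := by simpa using (abs_nonneg _).trans (hG 0)
  refine ⟨max 1 (2 ^ ((n : ℝ) + α) * C *
      (∫ v : EuclideanSpace ℝ (Fin n), (1 + ‖v‖) ^ (-((n : ℝ) + α))) *
      max 1 (volume.real (ball (0 : EuclideanSpace ℝ (Fin n)) 1))⁻¹),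
    by positivity, fun r hr t ht f x ↦ ?_⟩
  have key := lintegral_enorm_selfSimilar_kernel_mul_le volume (f := f) hG hC
    (by rw [hd]; linarith) (ENNReal.one_le_ofReal.2 hr) s ht x
  rw [hd, ENNReal.toReal_ofReal (by linarith)] at key
  by_cases hm : AEStronglyMeasurable (fun y ↦ t ^ (-(n : ℝ) / (2 * s)) *
      G₁ (t ^ (-(1 : ℝ) / (2 * s)) • (x - y)) * f y) volume
  · calc _ ≤ ∫⁻ y, ‖t ^ (-(n : ℝ) / (2 * s)) * G₁ (t ^ (-(1 : ℝ) / (2 * s)) • (x - y)) * f y‖ₑ :=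
          (Real.enorm_eq_ofReal_abs _).symm.trans_le (enorm_integral_le_lintegral_enorm _)
      _ ≤ _ := key hm
      _ ≤ _ := by gcongr; exacts [le_max_right _ _, le_rfl]
  · rw [integral_non_aestronglyMeasurable hm]
    simp

/-- `L^r_uloc → L^∞` bound for convolution with a self-similar kernel with
polynomial decay. -/
theorem kernel_conv_Linfty_uloc (n : ℕ) (hn : 0 < n) (s α C : ℝ)
    (hs : 0 < s) (hα : 0 < α) (hC : 0 < C)
    (G₁ : EuclideanSpace ℝ (Fin n) → ℝ)
    (hG : ∀ x, |G₁ x| ≤ C * (1 + ‖x‖) ^ (-((n : ℝ) + α))) :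
    ∃ C' > 0, ∀ r : ℝ, 1 ≤ r → ∀ t : ℝ, 0 < t →
      ∀ f : EuclideanSpace ℝ (Fin n) → ℝ, ∀ x,
        ENNReal.ofReal
            |∫ y, (t ^ (-(n : ℝ) / (2 * s)) * G₁ ((t ^ (-(1 : ℝ) / (2 * s))) • (x - y))) * f y| ≤
          ENNReal.ofReal (C' * max 1 (t ^ (-(n : ℝ) / (2 * s * r)))) *
            ⨆ x₀ : EuclideanSpace ℝ (Fin n),
              eLpNorm f (ENNReal.ofReal r) (volume.restrict (ball x₀ 1)) :=
  kernel_conv_Linfty_uloc_general n s α C hα G₁ hG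
end

section
/- Let k : ℝ³ \ {0} → ℝ satisfy |k(x−y) − k(x₀−y)| ≤ C|x−x₀|/|x−y|⁴ for |x−x₀| ≤ |x−y|/2. Fix x₀ ∈ ℝ³ and a cutoff ψ_{x₀} ∈ C_c^∞(B₈(x₀)) with ψ_{x₀} = 1 on B₄(x₀) and 0 ≤ ψ_{x₀} ≤ 1. For F ∈ L¹_{uloc}(ℝ³) (matrix valued, representing u⊗u at a fixed time), define P²(x) = ∫_{ℝ³}(k(x−y) − k(x₀−y)) F(y)(1 − ψ_{x₀}(y)) dy. Then P² is well-defined and bounded on B₂(x₀) with sup_{x ∈ B₂(x₀)} |P²(x)| ≤ C' ‖F‖_{L¹_{uloc}}. -/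
open MeasureTheory Metric
open scoped ENNReal

private lemma aux_far_J_lt_top (K : ℝ) :
    (∫⁻ w : EuclideanSpace ℝ (Fin 3),
      Set.indicator {w : EuclideanSpace ℝ (Fin 3) | 3 ≤ ‖w‖}
        (fun w => ENNReal.ofReal (K / ‖w‖ ^ 4)) w) < ⊤ := by
  have hbd : ∀ w : EuclideanSpace ℝ (Fin 3),
      Set.indicator {w : EuclideanSpace ℝ (Fin 3) | 3 ≤ ‖w‖}
        (fun w => ENNReal.ofReal (K / ‖w‖ ^ 4)) w
        ≤ ENNReal.ofReal (|K| * (4/3)^4) * ENNReal.ofReal ((1 + ‖w‖) ^ (-(4:ℝ))) := by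
    intro w
    by_cases hw : w ∈ {w : EuclideanSpace ℝ (Fin 3) | 3 ≤ ‖w‖}
    · rw [Set.indicator_of_mem hw, ← ENNReal.ofReal_mul (by positivity)]
      apply ENNReal.ofReal_le_ofReal
      have hw3 : (3:ℝ) ≤ ‖w‖ := hw
      have h1 : (0:ℝ) < ‖w‖ := by linarith
      have h2 : ((1:ℝ) + ‖w‖) ^ (-(4:ℝ)) = ((1+‖w‖)^(4:ℕ))⁻¹ := by
        rw [← Real.rpow_natCast (1+‖w‖) 4, ← Real.rpow_neg (by positivity)]
        norm_num
      have e2 : (1+‖w‖)^(4:ℕ) ≤ (4/3)^4 * ‖w‖^4 := by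
        calc (1+‖w‖)^(4:ℕ) ≤ ((4/3)*‖w‖)^4 := by
              apply pow_le_pow_left₀ (by positivity)
              linarith
          _ = (4/3)^4 * ‖w‖^4 := by ring
      rw [h2, ← div_eq_mul_inv, div_le_div_iff₀ (by positivity) (by positivity)]
      calc K * (1+‖w‖)^4 ≤ |K| * (1+‖w‖)^4 := by
            apply mul_le_mul_of_nonneg_right (le_abs_self K) (by positivity)
        _ ≤ |K| * ((4/3)^4 * ‖w‖^4) := by
            apply mul_le_mul_of_nonneg_left e2 (abs_nonneg K)
        _ = |K| * (4/3)^4 * ‖w‖^4 := by ring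
    · rw [Set.indicator_of_notMem hw]; exact zero_le
  calc (∫⁻ w : EuclideanSpace ℝ (Fin 3),
      Set.indicator {w : EuclideanSpace ℝ (Fin 3) | 3 ≤ ‖w‖}
        (fun w => ENNReal.ofReal (K / ‖w‖ ^ 4)) w)
      ≤ ∫⁻ w : EuclideanSpace ℝ (Fin 3),
          ENNReal.ofReal (|K| * (4/3)^4) * ENNReal.ofReal ((1 + ‖w‖) ^ (-(4:ℝ))) :=
        lintegral_mono hbd
    _ = ENNReal.ofReal (|K| * (4/3)^4) *
          ∫⁻ w : EuclideanSpace ℝ (Fin 3), ENNReal.ofReal ((1 + ‖w‖) ^ (-(4:ℝ))) :=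
        lintegral_const_mul' _ _ ENNReal.ofReal_ne_top
    _ < ⊤ := by
        apply ENNReal.mul_lt_top ENNReal.ofReal_lt_top
        refine (finite_integral_one_add_norm ?_)
        simp [finrank_euclideanSpace]
        norm_num

private lemma aux_avg (u : EuclideanSpace ℝ (Fin 3) → ℝ≥0∞) (hu : Measurable u) :
    volume (ball (0 : EuclideanSpace ℝ (Fin 3)) 1) * ∫⁻ y, u y =
      ∫⁻ z : EuclideanSpace ℝ (Fin 3), ∫⁻ y in ball z 1, u y := by
  classical
  have hm : Measurable fun p : EuclideanSpace ℝ (Fin 3) × EuclideanSpace ℝ (Fin 3) =>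
      if dist p.2 p.1 < 1 then u p.2 else 0 := by
    apply Measurable.ite
    · exact (isOpen_lt (continuous_dist.comp (continuous_snd.prodMk continuous_fst))
        continuous_const).measurableSet
    · exact hu.comp measurable_snd
    · exact measurable_const
  symm
  calc (∫⁻ z : EuclideanSpace ℝ (Fin 3), ∫⁻ y in ball z 1, u y)
      = ∫⁻ z : EuclideanSpace ℝ (Fin 3), ∫⁻ y, (if dist y z < 1 then u y else 0) := by
        refine lintegral_congr fun z => ?_
        rw [← lintegral_indicator measurableSet_ball]
        refine lintegral_congr fun y => ?_
        simp [Set.indicator_apply, mem_ball]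
    _ = ∫⁻ y : EuclideanSpace ℝ (Fin 3), ∫⁻ z, (if dist y z < 1 then u y else 0) := by
        exact lintegral_lintegral_swap hm.aemeasurable
    _ = ∫⁻ y : EuclideanSpace ℝ (Fin 3), u y * volume (ball (0 : EuclideanSpace ℝ (Fin 3)) 1) := by
        refine lintegral_congr fun y => ?_
        have : (fun z => if dist y z < 1 then u y else 0)
            = Set.indicator (ball y 1) (fun _ => u y) := by
          funext z
          simp [Set.indicator_apply, mem_ball, dist_comm]
        rw [this, lintegral_indicator measurableSet_ball, setLIntegral_const,
          Measure.addHaar_ball_center]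
    _ = (∫⁻ y, u y) * volume (ball (0 : EuclideanSpace ℝ (Fin 3)) 1) :=
        lintegral_mul_const _ hu
    _ = volume (ball (0 : EuclideanSpace ℝ (Fin 3)) 1) * ∫⁻ y, u y := mul_comm _ _

/-- the far-field pressure piece
`P²(x) = ∫ (k(x−y) − k(x₀−y)) F(y)(1 − ψ_{x₀}(y)) dy` is uniformly bounded on `B₂(x₀)` by
`C' ‖F‖_{L¹_uloc}`, for a Calderón–Zygmund-type kernel `k`. -/
theorem pressure_far_field_bound (C : ℝ) (hC : 0 < C) (k : EuclideanSpace ℝ (Fin 3) → ℝ)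
    (hk0 : ∀ z : EuclideanSpace ℝ (Fin 3), z ≠ 0 → |k z| ≤ C / ‖z‖ ^ 3)
    (hk : ∀ x x₀ y : EuclideanSpace ℝ (Fin 3), x ≠ y → ‖x - x₀‖ ≤ ‖x - y‖ / 2 →
      |k (x - y) - k (x₀ - y)| ≤ C * ‖x - x₀‖ / ‖x - y‖ ^ 4) :
    ∃ C' > 0, ∀ (x₀ : EuclideanSpace ℝ (Fin 3)) (ψ : EuclideanSpace ℝ (Fin 3) → ℝ),
      ContDiff ℝ (⊤ : ℕ∞) ψ → HasCompactSupport ψ → tsupport ψ ⊆ ball x₀ 8 →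
      (∀ x ∈ ball x₀ 4, ψ x = 1) → (∀ x, 0 ≤ ψ x ∧ ψ x ≤ 1) →
      ∀ F : EuclideanSpace ℝ (Fin 3) → ℝ, ∀ x ∈ ball x₀ 2,
        ENNReal.ofReal |∫ y, (k (x - y) - k (x₀ - y)) * F y * (1 - ψ y)| ≤
          ENNReal.ofReal C' *
            ⨆ z₀ : EuclideanSpace ℝ (Fin 3), eLpNorm F 1 (volume.restrict (ball z₀ 1)) := by
  classical
  set v : ℝ≥0∞ := volume (ball (0 : EuclideanSpace ℝ (Fin 3)) 1) with hv
  have hv0 : v ≠ 0 := (measure_ball_pos volume _ one_pos).ne'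
  have hvtop : v ≠ ⊤ := measure_ball_lt_top.ne
  set K : ℝ := 2 * C * (3/2)^4 with hKdef
  set J : ℝ≥0∞ := ∫⁻ w : EuclideanSpace ℝ (Fin 3),
      Set.indicator {w : EuclideanSpace ℝ (Fin 3) | 3 ≤ ‖w‖}
        (fun w => ENNReal.ofReal (K / ‖w‖ ^ 4)) w with hJdef
  have hJtop : J ≠ ⊤ := (aux_far_J_lt_top K).ne
  have hvJtop : v⁻¹ * J ≠ ⊤ :=
    ENNReal.mul_ne_top (ENNReal.inv_ne_top.mpr hv0) hJtop
  refine ⟨(v⁻¹ * J).toReal + 1, by positivity, ?_⟩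
  intro x₀ ψ hψC hψcs hψsupp hψ1 hψ01 F x hx
  set M : ℝ≥0∞ := ⨆ z₀ : EuclideanSpace ℝ (Fin 3),
    eLpNorm F 1 (volume.restrict (ball z₀ 1)) with hM
  set g : EuclideanSpace ℝ (Fin 3) → ℝ≥0∞ :=
    fun y => Set.indicator {y : EuclideanSpace ℝ (Fin 3) | 4 ≤ ‖y - x₀‖}
      (fun y => ENNReal.ofReal (2*C / ‖y - x₀‖^4)) y with hgdef
  set h : EuclideanSpace ℝ (Fin 3) → ℝ≥0∞ :=
    fun z => Set.indicator {z : EuclideanSpace ℝ (Fin 3) | 3 ≤ ‖z - x₀‖}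
      (fun z => ENNReal.ofReal (K / ‖z - x₀‖^4)) z with hhdef
  have hnorm_meas : Measurable fun y : EuclideanSpace ℝ (Fin 3) => ‖y - x₀‖ :=
    ((continuous_id.sub continuous_const).norm).measurable
  have hg_meas : Measurable g := by
    apply Measurable.indicator
    · exact (measurable_const.div (hnorm_meas.pow_const 4)).ennreal_ofReal
    · exact (isClosed_le continuous_const (continuous_id.sub continuous_const).norm).measurableSet
  have hh_meas : Measurable h := by
    apply Measurable.indicator
    · exact (measurable_const.div (hnorm_meas.pow_const 4)).ennreal_ofReal
    · exact (isClosed_le continuous_const (continuous_id.sub continuous_const).norm).measurableSet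
  have hgtop : ∀ y, g y ≠ ⊤ := by
    intro y
    by_cases hy : y ∈ {y : EuclideanSpace ℝ (Fin 3) | 4 ≤ ‖y - x₀‖}
    · simp [hgdef, Set.indicator_of_mem hy]
    · simp [hgdef, Set.indicator_of_notMem hy]
  -- step 1 : bound the integral by the lintegral of the norm
  have step1 : ENNReal.ofReal |∫ y, (k (x - y) - k (x₀ - y)) * F y * (1 - ψ y)| ≤
      ∫⁻ y, ‖(k (x - y) - k (x₀ - y)) * F y * (1 - ψ y)‖₊ := by
    rw [← Real.enorm_eq_ofReal_abs]
    exact enorm_integral_le_lintegral_enorm _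
  -- step 2 : pointwise kernel bound
  have hx2 : ‖x - x₀‖ < 2 := by
    have := mem_ball.mp hx
    rwa [dist_eq_norm] at this
  have step2 : ∀ y, (‖(k (x - y) - k (x₀ - y)) * F y * (1 - ψ y)‖₊ : ℝ≥0∞) ≤ g y * ‖F y‖₊ := by
    intro y
    by_cases hy : 4 ≤ ‖y - x₀‖
    · have hxy : ‖x₀ - y‖ = ‖y - x₀‖ := norm_sub_rev _ _
      have hne : x₀ ≠ y := by
        intro hEq
        rw [hEq, sub_self, norm_zero] at hy
        linarith
      have hcond : ‖x₀ - x‖ ≤ ‖x₀ - y‖ / 2 := by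
        rw [norm_sub_rev x₀ x, hxy]
        linarith
      have hb := hk x₀ x y hne hcond
      have h4 : (0:ℝ) < ‖y - x₀‖^4 := by positivity
      have habs : |k (x - y) - k (x₀ - y)| ≤ 2*C / ‖y - x₀‖^4 := by
        rw [abs_sub_comm]
        refine hb.trans ?_
        rw [hxy, norm_sub_rev x₀ x]
        have hnum : C * ‖x - x₀‖ ≤ 2 * C := by nlinarith
        rw [div_le_div_iff₀ h4 h4]
        nlinarith [mul_le_mul_of_nonneg_right hnum h4.le]
      have hψy : |1 - ψ y| ≤ 1 := by
        obtain ⟨h0, h1'⟩ := hψ01 y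
        rw [abs_le]; constructor <;> linarith
      have hABS : |(k (x - y) - k (x₀ - y)) * F y * (1 - ψ y)| ≤ (2*C/‖y - x₀‖^4) * |F y| := by
        rw [abs_mul, abs_mul]
        calc |k (x - y) - k (x₀ - y)| * |F y| * |1 - ψ y|
            ≤ |k (x - y) - k (x₀ - y)| * |F y| * 1 := by
              apply mul_le_mul_of_nonneg_left hψy (by positivity)
          _ = |k (x - y) - k (x₀ - y)| * |F y| := mul_one _
          _ ≤ (2*C/‖y - x₀‖^4) * |F y| := by
              apply mul_le_mul_of_nonneg_right habs (abs_nonneg _)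
      calc (‖(k (x - y) - k (x₀ - y)) * F y * (1 - ψ y)‖₊ : ℝ≥0∞)
          = ENNReal.ofReal |(k (x - y) - k (x₀ - y)) * F y * (1 - ψ y)| :=
            Real.enorm_eq_ofReal_abs _
        _ ≤ ENNReal.ofReal ((2*C/‖y - x₀‖^4) * |F y|) := ENNReal.ofReal_le_ofReal hABS
        _ = ENNReal.ofReal (2*C/‖y - x₀‖^4) * ENNReal.ofReal |F y| :=
            ENNReal.ofReal_mul (by positivity)
        _ = g y * ‖F y‖₊ := by
            have hgy : g y = ENNReal.ofReal (2*C / ‖y - x₀‖^4) := by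
              rw [hgdef]; exact Set.indicator_of_mem (show y ∈ {y : EuclideanSpace ℝ (Fin 3) | 4 ≤ ‖y - x₀‖} from hy) _
            rw [hgy]; exact congrArg (ENNReal.ofReal (2*C/‖y - x₀‖^4) * ·) (Real.enorm_eq_ofReal_abs (F y)).symm
    · have hmem : y ∈ ball x₀ 4 := by
        rw [mem_ball, dist_eq_norm]
        exact not_le.mp hy
      rw [hψ1 y hmem]
      simp
  -- step 3 : the uloc bound
  obtain ⟨φ, hφm, hφle, hφeq⟩ := exists_measurable_le_lintegral_eq volume
    (fun y => g y * ‖F y‖₊)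
  set t : EuclideanSpace ℝ (Fin 3) → ℝ≥0∞ := fun y => φ y * (g y)⁻¹ with htdef
  have htm : Measurable t := hφm.mul hg_meas.inv
  have hφ0 : ∀ y, g y = 0 → φ y = 0 := by
    intro y hgy
    have := hφle y
    simp only [hgy, zero_mul] at this
    exact le_antisymm this zero_le
  have ht_le : ∀ y, t y ≤ ‖F y‖₊ := by
    intro y
    by_cases hgy : g y = 0
    · simp [htdef, hφ0 y hgy]
    · calc t y = φ y * (g y)⁻¹ := rfl
        _ ≤ (g y * ‖F y‖₊) * (g y)⁻¹ := mul_le_mul_left (hφle y) _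
        _ = ‖F y‖₊ * (g y * (g y)⁻¹) := by ring
        _ = ‖F y‖₊ := by rw [ENNReal.mul_inv_cancel hgy (hgtop y), mul_one]
  have hφ_eq : ∀ y, φ y = g y * t y := by
    intro y
    by_cases hgy : g y = 0
    · simp [htdef, hφ0 y hgy, hgy]
    · show φ y = g y * (φ y * (g y)⁻¹)
      rw [mul_comm (g y), mul_assoc, ENNReal.inv_mul_cancel hgy (hgtop y), mul_one]
  have g_le_h : ∀ z : EuclideanSpace ℝ (Fin 3), ∀ y ∈ ball z 1, g y ≤ h z := by
    intro z y hy
    have hyz : ‖y - z‖ < 1 := by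
      have := mem_ball.mp hy
      rwa [dist_eq_norm] at this
    by_cases h4 : 4 ≤ ‖y - x₀‖
    · have htri : ‖y - x₀‖ ≤ ‖y - z‖ + ‖z - x₀‖ := norm_sub_le_norm_sub_add_norm_sub _ _ _
      have hz3 : (3:ℝ) ≤ ‖z - x₀‖ := by linarith
      have htri2 : ‖z - x₀‖ ≤ ‖z - y‖ + ‖y - x₀‖ := norm_sub_le_norm_sub_add_norm_sub _ _ _
      have hzy : ‖z - y‖ < 1 := by rw [norm_sub_rev]; exact hyz
      have hbound : ‖z - x₀‖ ≤ (3/2) * ‖y - x₀‖ := by linarith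
      have hgy : g y = ENNReal.ofReal (2*C / ‖y - x₀‖^4) := by
        rw [hgdef]; exact Set.indicator_of_mem (show y ∈ {y : EuclideanSpace ℝ (Fin 3) | 4 ≤ ‖y - x₀‖} from h4) _
      have hhz : h z = ENNReal.ofReal (K / ‖z - x₀‖^4) := by
        rw [hhdef]; exact Set.indicator_of_mem (show z ∈ {z : EuclideanSpace ℝ (Fin 3) | 3 ≤ ‖z - x₀‖} from hz3) _
      rw [hgy, hhz]
      apply ENNReal.ofReal_le_ofReal
      rw [hKdef, div_le_div_iff₀ (by positivity) (by positivity)]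
      have hpow : ‖z - x₀‖^4 ≤ (3/2)^4 * ‖y - x₀‖^4 := by
        calc ‖z - x₀‖^4 ≤ ((3/2) * ‖y - x₀‖)^4 := by
              apply pow_le_pow_left₀ (by positivity) hbound
          _ = (3/2)^4 * ‖y - x₀‖^4 := by ring
      calc 2*C * ‖z - x₀‖^4 ≤ 2*C * ((3/2)^4 * ‖y - x₀‖^4) := by
            apply mul_le_mul_of_nonneg_left hpow (by positivity)
        _ = 2*C*(3/2)^4 * ‖y - x₀‖^4 := by ring
    · have hgy : g y = 0 := by
        rw [hgdef]; exact Set.indicator_of_notMem (show y ∉ {y : EuclideanSpace ℝ (Fin 3) | 4 ≤ ‖y - x₀‖} from h4) _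
      rw [hgy]
      exact zero_le
  have hinner : ∀ z : EuclideanSpace ℝ (Fin 3), (∫⁻ y in ball z 1, φ y) ≤ h z * M := by
    intro z
    calc (∫⁻ y in ball z 1, φ y) = ∫⁻ y in ball z 1, g y * t y := by
          refine lintegral_congr fun y => hφ_eq y
      _ ≤ ∫⁻ y in ball z 1, h z * t y := by
          apply setLIntegral_mono (htm.const_mul _) fun y hy => ?_
          exact mul_le_mul_left (g_le_h z y hy) _
      _ = h z * ∫⁻ y in ball z 1, t y := lintegral_const_mul _ htm
      _ ≤ h z * M := by
          apply mul_le_mul_right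
          refine le_trans ?_ (le_iSup _ z)
          rw [eLpNorm_one_eq_lintegral_enorm]
          exact lintegral_mono ht_le
  have hJx : (∫⁻ z : EuclideanSpace ℝ (Fin 3), h z) = J := by
    have : ∀ z : EuclideanSpace ℝ (Fin 3), h z =
        Set.indicator {w : EuclideanSpace ℝ (Fin 3) | 3 ≤ ‖w‖}
          (fun w => ENNReal.ofReal (K / ‖w‖ ^ 4)) (z - x₀) := by
      intro z
      by_cases hz : (3:ℝ) ≤ ‖z - x₀‖
      · have e1 : h z = ENNReal.ofReal (K / ‖z - x₀‖^4) := by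
          rw [hhdef]; exact Set.indicator_of_mem (show z ∈ {z : EuclideanSpace ℝ (Fin 3) | 3 ≤ ‖z - x₀‖} from hz) _
        have e2 : Set.indicator {w : EuclideanSpace ℝ (Fin 3) | 3 ≤ ‖w‖}
            (fun w => ENNReal.ofReal (K / ‖w‖ ^ 4)) (z - x₀)
            = ENNReal.ofReal (K / ‖z - x₀‖^4) := by
          exact Set.indicator_of_mem (show z - x₀ ∈ {w : EuclideanSpace ℝ (Fin 3) | 3 ≤ ‖w‖} from hz) _
        rw [e1, e2]
      · have e1 : h z = 0 := by
          rw [hhdef]; exact Set.indicator_of_notMem (show z ∉ {z : EuclideanSpace ℝ (Fin 3) | 3 ≤ ‖z - x₀‖} from hz) _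
        have e2 : Set.indicator {w : EuclideanSpace ℝ (Fin 3) | 3 ≤ ‖w‖}
            (fun w => ENNReal.ofReal (K / ‖w‖ ^ 4)) (z - x₀) = 0 := by
          exact Set.indicator_of_notMem (show z - x₀ ∉ {w : EuclideanSpace ℝ (Fin 3) | 3 ≤ ‖w‖} from hz) _
        rw [e1, e2]
    rw [hJdef]
    calc (∫⁻ z : EuclideanSpace ℝ (Fin 3), h z)
        = ∫⁻ z : EuclideanSpace ℝ (Fin 3),
            Set.indicator {w : EuclideanSpace ℝ (Fin 3) | 3 ≤ ‖w‖}
              (fun w => ENNReal.ofReal (K / ‖w‖ ^ 4)) (z - x₀) := lintegral_congr this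
      _ = _ := lintegral_sub_right_eq_self _ x₀
  have step3 : (∫⁻ y, g y * ‖F y‖₊) ≤ v⁻¹ * J * M := by
    rw [hφeq]
    have hkey : v * ∫⁻ y, φ y ≤ J * M := by
      rw [aux_avg φ hφm]
      calc (∫⁻ z : EuclideanSpace ℝ (Fin 3), ∫⁻ y in ball z 1, φ y)
          ≤ ∫⁻ z : EuclideanSpace ℝ (Fin 3), h z * M := lintegral_mono hinner
        _ = (∫⁻ z : EuclideanSpace ℝ (Fin 3), h z) * M := lintegral_mul_const _ hh_meas
        _ = J * M := by rw [hJx]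
    have hkey' : (∫⁻ y, φ y) * v ≤ J * M := by
      rw [mul_comm]; exact hkey
    calc (∫⁻ y, φ y) ≤ J * M / v :=
        (ENNReal.le_div_iff_mul_le (Or.inl hv0) (Or.inl hvtop)).mpr hkey'
      _ = v⁻¹ * J * M := by
          rw [ENNReal.div_eq_inv_mul]
          ring
  -- conclude
  calc ENNReal.ofReal |∫ y, (k (x - y) - k (x₀ - y)) * F y * (1 - ψ y)|
      ≤ ∫⁻ y, ‖(k (x - y) - k (x₀ - y)) * F y * (1 - ψ y)‖₊ := step1
    _ ≤ ∫⁻ y, g y * ‖F y‖₊ := lintegral_mono step2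
    _ ≤ v⁻¹ * J * M := step3
    _ ≤ ENNReal.ofReal ((v⁻¹ * J).toReal + 1) * M := by
        apply mul_le_mul_left
        rw [ENNReal.ofReal_add ENNReal.toReal_nonneg zero_le_one,
          ENNReal.ofReal_toReal hvJtop, ENNReal.ofReal_one]
        exact le_self_add
end
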